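/- In the double semion condensation model, the global symmetry operator U_g transforms coherent states with the 2-cocycle phases of the paper: for every g ∈ ZMod 2 and all parameters g₀ ∈ ZMod 2, h, g_• : Fin N → ZMod 2, U_g ψ'_{g₀; h, g_•} = (∏_{k=2}^{N} μ_g(h₁+⋯+h_{k−1}, h_k)) · (∏_{n=1}^{N} β_{h_n}(g, g_n)) · ψ'_{g+g₀; h, (g+g_n)_n}, where μ_g(x,y) = −1 if g = x = y = 1 and 1 otherwise, and β_h(g,g') = −1 if h = g = g' = 1 and 1 otherwise (all ℤ₂ sums modulo 2). -/
import Mathlib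


/-- The effective Hilbert space of the double semion condensation model with `N` anyon
sites: functions from (condensate label, per-site (charge, flux)) to `ℂ`. -/
abbrev Hsp (N : ℕ) : Type := (ZMod 2 × (Fin N → ZMod 2 × ZMod 2)) → ℂ

/-- The diagonal operator of multiplication by `c`. -/
noncomputable def diagOp {X : Type*} (c : X → ℂ) : (X → ℂ) →ₗ[ℂ] (X → ℂ) where
  toFun f := fun x => c x * f x
  map_add' f g := by funext x; simp [mul_add]
  map_smul' r f := by funext x; simp [smul_eq_mul]; ring

/-- The 2-cochain `μ_g(x,y) = −1` if `g = x = y = 1` and `1` otherwise. -/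
def muPh (g x y : ZMod 2) : ℂ := if g = 1 ∧ x = 1 ∧ y = 1 then -1 else 1

/-- The 2-cocycle phase `β_h(g,g') = −1` if `h = g = g' = 1` and `1` otherwise. -/
def betaPh (h g g' : ZMod 2) : ℂ := if h = 1 ∧ g = 1 ∧ g' = 1 then -1 else 1

/-- The product `∏_{k=2}^{N} μ_g(φ₁+⋯+φ_{k−1}, φ_k)` of 2-cochain phases. -/
def muProd (N : ℕ) (g : ZMod 2) (φ : Fin N → ZMod 2) : ℂ :=
  ∏ k ∈ Finset.univ.filter (fun k : Fin N => 0 < k.val),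
    muPh g (∑ l ∈ Finset.univ.filter (fun l : Fin N => l < k), φ l) (φ k)

/-- The global symmetry operator of the double semion condensation model:
`(U_g f)(a,j) = (∏_{k=2}^{N} μ_g(φ₁+⋯+φ_{k−1}, φ_k)) · (−1)^{g·a} ·
∏_n ((−1)^{g·c_n} · i^{g·φ_n}) · f(a,j)`. -/
noncomputable def uOpDS (N : ℕ) (g : ZMod 2) : Hsp N →ₗ[ℂ] Hsp N :=
  diagOp (fun p => muProd N g (fun n => (p.2 n).2) *
    (-1 : ℂ) ^ (g.val * p.1.val) *
    ∏ n : Fin N,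
      ((-1 : ℂ) ^ (g.val * ((p.2 n).1).val) * Complex.I ^ (g.val * ((p.2 n).2).val)))

/-- The double semion coherent state `ψ'_{g₀;h,g}`. -/
noncomputable def cohDS (N : ℕ) (g0 : ZMod 2) (h g : Fin N → ZMod 2) : Hsp N :=
  fun p => (((2 : ℝ) ^ (-(((N : ℝ) + 1) / 2)) : ℝ) : ℂ) *
    (-1 : ℂ) ^ (g0.val * p.1.val) *
    ∏ n : Fin N,
      (if (p.2 n).2 = h n then
        (-1 : ℂ) ^ ((g n).val * ((p.2 n).1).val) * Complex.I ^ ((g n).val * (h n).val)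
      else 0)


lemma zmod2_cases (x : ZMod 2) : x = 0 ∨ x = 1 := by revert x; decide

lemma negA (g g0 a : ZMod 2) :
    ((-1 : ℂ)) ^ (g.val * a.val) * (-1) ^ (g0.val * a.val)
      = (-1) ^ ((g + g0).val * a.val) := by
  rcases zmod2_cases g with rfl | rfl <;> rcases zmod2_cases g0 with rfl | rfl <;>
    rcases zmod2_cases a with rfl | rfl <;>
      norm_num [show ZMod.val (2 : ZMod 2) = 0 from rfl, show ZMod.val (1 : ZMod 2) = 1 from rfl]

lemma siteB (g gv c h : ZMod 2) :
    ((-1 : ℂ)) ^ (g.val * c.val) * Complex.I ^ (g.val * h.val) *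
      ((-1) ^ (gv.val * c.val) * Complex.I ^ (gv.val * h.val))
      = betaPh h g gv *
        ((-1) ^ ((g + gv).val * c.val) * Complex.I ^ ((g + gv).val * h.val)) := by
  rcases zmod2_cases g with rfl | rfl <;> rcases zmod2_cases gv with rfl | rfl <;>
    rcases zmod2_cases c with rfl | rfl <;> rcases zmod2_cases h with rfl | rfl <;>
      norm_num [betaPh, Complex.I_sq, show ZMod.val (2 : ZMod 2) = 0 from rfl,
        show ZMod.val (1 : ZMod 2) = 1 from rfl]

/-- in the double semion condensation model, the global symmetry
operator `U_g` transforms coherent states with the 2-cocycle phases of the paper: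
`U_g ψ'_{g₀;h,g_•} = (∏_{k=2}^{N} μ_g(h₁+⋯+h_{k−1}, h_k)) · (∏_n β_{h_n}(g,g_n)) ·
ψ'_{g+g₀;h,(g+g_n)_n}`. -/
theorem uOpDS_cohDS (N : ℕ) (hN : 1 ≤ N) (g g0 : ZMod 2) (h gv : Fin N → ZMod 2) :
    uOpDS N g (cohDS N g0 h gv) =
      (muProd N g h * ∏ n : Fin N, betaPh (h n) g (gv n)) •
        cohDS N (g + g0) h (fun n => g + gv n) := by
  funext p
  obtain ⟨a, j⟩ := p
  simp only [uOpDS, diagOp, cohDS, LinearMap.coe_mk, AddHom.coe_mk, Pi.smul_apply, smul_eq_mul]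
  by_cases hall : ∀ n : Fin N, (j n).2 = h n
  · have hφ : (fun n => (j n).2) = h := funext hall
    rw [hφ]
    have hP : ∀ g' : Fin N → ZMod 2,
        (∏ n : Fin N, (if (j n).2 = h n then
          (-1 : ℂ) ^ ((g' n).val * ((j n).1).val) * Complex.I ^ ((g' n).val * (h n).val)
          else 0))
        = ∏ n : Fin N, ((-1 : ℂ) ^ ((g' n).val * ((j n).1).val)
            * Complex.I ^ ((g' n).val * (h n).val)) := by
      intro g'; exact Finset.prod_congr rfl (fun n _ => if_pos (hall n))
    rw [hP gv, hP (fun n => g + gv n)]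
    have hS : ∀ n : Fin N, (j n).2.val = (h n).val := fun n => by rw [hall n]
    have hmu : (∏ n : Fin N,
          ((-1 : ℂ) ^ (g.val * ((j n).1).val) * Complex.I ^ (g.val * ((j n).2).val)))
        = ∏ n : Fin N,
          ((-1 : ℂ) ^ (g.val * ((j n).1).val) * Complex.I ^ (g.val * ((h n)).val)) :=
      Finset.prod_congr rfl (fun n _ => by rw [hS n])
    rw [hmu]
    have key : (∏ n : Fin N,
          ((-1 : ℂ) ^ (g.val * ((j n).1).val) * Complex.I ^ (g.val * (h n).val))) *
        (∏ n : Fin N,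
          ((-1 : ℂ) ^ ((gv n).val * ((j n).1).val) * Complex.I ^ ((gv n).val * (h n).val)))
        = (∏ n : Fin N, betaPh (h n) g (gv n)) *
          (∏ n : Fin N, ((-1 : ℂ) ^ ((g + gv n).val * ((j n).1).val)
            * Complex.I ^ ((g + gv n).val * (h n).val))) := by
      rw [← Finset.prod_mul_distrib, ← Finset.prod_mul_distrib]
      exact Finset.prod_congr rfl (fun n _ => siteB g (gv n) ((j n).1) (h n))
    have hA := negA g g0 a
    calc muProd N g h * (-1 : ℂ) ^ (g.val * a.val) *
          (∏ n : Fin N, ((-1 : ℂ) ^ (g.val * ((j n).1).val)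
            * Complex.I ^ (g.val * (h n).val))) *
          ((((2 : ℝ) ^ (-(((N : ℝ) + 1) / 2)) : ℝ) : ℂ) * (-1) ^ (g0.val * a.val) *
            ∏ n : Fin N, ((-1 : ℂ) ^ ((gv n).val * ((j n).1).val)
              * Complex.I ^ ((gv n).val * (h n).val)))
        = muProd N g h * (((2 : ℝ) ^ (-(((N : ℝ) + 1) / 2)) : ℝ) : ℂ) *
            ((-1 : ℂ) ^ (g.val * a.val) * (-1) ^ (g0.val * a.val)) *
            ((∏ n : Fin N, ((-1 : ℂ) ^ (g.val * ((j n).1).val)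
              * Complex.I ^ (g.val * (h n).val))) *
             (∏ n : Fin N, ((-1 : ℂ) ^ ((gv n).val * ((j n).1).val)
              * Complex.I ^ ((gv n).val * (h n).val)))) := by ring
      _ = muProd N g h * (((2 : ℝ) ^ (-(((N : ℝ) + 1) / 2)) : ℝ) : ℂ) *
            ((-1 : ℂ) ^ ((g + g0).val * a.val)) *
            ((∏ n : Fin N, betaPh (h n) g (gv n)) *
             (∏ n : Fin N, ((-1 : ℂ) ^ ((g + gv n).val * ((j n).1).val)
              * Complex.I ^ ((g + gv n).val * (h n).val)))) := by rw [hA, key]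
      _ = muProd N g h * (∏ n : Fin N, betaPh (h n) g (gv n)) *
            ((((2 : ℝ) ^ (-(((N : ℝ) + 1) / 2)) : ℝ) : ℂ) *
              (-1) ^ ((g + g0).val * a.val) *
              ∏ n : Fin N, ((-1 : ℂ) ^ ((g + gv n).val * ((j n).1).val)
                * Complex.I ^ ((g + gv n).val * (h n).val))) := by ring
  · push_neg at hall
    obtain ⟨n, hn⟩ := hall
    have z1 : (∏ x : Fin N, (if (j x).2 = h x then
        (-1 : ℂ) ^ ((gv x).val * ((j x).1).val) * Complex.I ^ ((gv x).val * (h x).val)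
        else 0)) = 0 := Finset.prod_eq_zero (Finset.mem_univ n) (if_neg hn)
    have z2 : (∏ x : Fin N, (if (j x).2 = h x then
        (-1 : ℂ) ^ ((g + gv x).val * ((j x).1).val)
          * Complex.I ^ ((g + gv x).val * (h x).val)
        else 0)) = 0 := Finset.prod_eq_zero (Finset.mem_univ n) (if_neg hn)
    rw [z1, z2]
    ring
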